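/- arXiv:1911.09216 — 2 statements merged into one kernel-verified Lean document; each statement's English description precedes it below -/
import Mathlib

section
/- If h, m, and 2m−h are all perfect squares of integers (with 0 < h < m), then (h, m, 2m−h) is a three-term arithmetic progression of squares, and m − h is a congruent number, i.e., m − h equals the area of a right triangle with rational side lengths. -/
/-- A rational number `d` is a congruent number if it is the area of a right
triangle with rational side lengths. -/
def IsCongruentNumber (d : ℚ) : Prop :=
  ∃ x y z : ℚ, 0 < x ∧ 0 < y ∧ x ^ 2 + y ^ 2 = z ^ 2 ∧ x * y / 2 = d

/-- If `h`, `m`, and `2m - h` are all perfect squares of integers with `0 < h < m`,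
then `(h, m, 2m - h)` is a three-term arithmetic progression of squares and
`m - h` is a congruent number. -/
theorem squares_in_ap_give_congruent_number (h m : ℤ) (h0 : 0 < h) (hm : h < m)
    (hsq_h : ∃ x : ℤ, h = x ^ 2) (hsq_m : ∃ y : ℤ, m = y ^ 2)
    (hsq : ∃ z : ℤ, 2 * m - h = z ^ 2) :
    m - h = (2 * m - h) - m ∧ IsCongruentNumber ((m : ℚ) - (h : ℚ)) := by
  obtain ⟨x, hx⟩ := hsq_h
  obtain ⟨y, hy⟩ := hsq_m
  obtain ⟨z, hz⟩ := hsq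
  refine ⟨by ring, ?_⟩
  have hxq : (h : ℚ) = |(x : ℚ)| ^ 2 := by rw [sq_abs]; exact_mod_cast hx
  have hyq : (m : ℚ) = |(y : ℚ)| ^ 2 := by rw [sq_abs]; exact_mod_cast hy
  have hzq : 2 * (m : ℚ) - h = |(z : ℚ)| ^ 2 := by rw [sq_abs]; exact_mod_cast hz
  have hax : (0 : ℚ) ≤ |(x : ℚ)| := abs_nonneg _
  have haz : (0 : ℚ) ≤ |(z : ℚ)| := abs_nonneg _
  have hhm : (h : ℚ) < m := by exact_mod_cast hm
  have hh0 : (0 : ℚ) < h := by exact_mod_cast h0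
  have hlt : |(x : ℚ)| < |(z : ℚ)| := by nlinarith
  refine ⟨|(z : ℚ)| - |(x : ℚ)|, |(z : ℚ)| + |(x : ℚ)|, 2 * |(y : ℚ)|, by linarith,
    by nlinarith, by nlinarith, by nlinarith⟩
end

section
/- Let D(s) = ∑_{n≥1} α(n)/n^s be a Dirichlet series, absolutely convergent for Re(s) large, that admits meromorphic continuation with a pole at s = σ₀ + it₀ with t₀ ≠ 0 real and nonzero residue. Then ∑_{n ≤ X} α(n) is not o(X^{σ₀}); i.e., limsup_{X→∞} |∑_{n≤X} α(n)|/X^{σ₀} > 0. -/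
/-!
Suppose the partial sums `A N = ∑_{1 ≤ n ≤ N} α n` were `o(N ^ σ₀)`. Partial summation rewrites
the Dirichlet series as `∑ A N (N ^ (-s) - (N + 1) ^ (-s))`, whose terms are `O(N ^ (σ₀ - Re s - 1))`;
this series converges locally uniformly on `Re s > σ₀`, so by the identity theorem it is `E` there.
At `s = s₀ + δ`, with `s₀ = σ₀ + i t₀` the pole, its terms are `o(N ^ (-1 - δ))`, and since
`δ ζ(1 + δ) → 1` this forces `δ E(s₀ + δ) → 0` as `δ → 0⁺`, whereas it tends to the residue `r ≠ 0`.
-/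

open Filter Asymptotics Topology

lemma Real.rpow_le_two_rpow_abs_mul_rpow {x y : ℝ} (e : ℝ) (hy : 0 < y) (hyx : y ≤ x)
    (hx : x ≤ 2 * y) : x ^ e ≤ 2 ^ |e| * y ^ e := by
  have hq : 1 ≤ x / y := (one_le_div hy).2 hyx
  calc x ^ e = (x / y) ^ e * y ^ e := by
        rw [Real.div_rpow (hy.le.trans hyx) hy.le, div_mul_cancel₀ _ (by positivity)]
    _ ≤ 2 ^ |e| * y ^ e := by
        gcongr
        calc (x / y) ^ e ≤ (x / y) ^ |e| := Real.rpow_le_rpow_of_exponent_le hq (le_abs_self e)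
          _ ≤ 2 ^ |e| := by gcongr; rwa [div_le_iff₀ hy]

lemma norm_natCast_cpow_neg_sub_succ_le (s : ℂ) {N : ℕ} (hN : 0 < N) :
    ‖(N : ℂ) ^ (-s) - ((N : ℂ) + 1) ^ (-s)‖ ≤ ‖s‖ * 2 ^ (‖s‖ + 1) / (N : ℝ) ^ (s.re + 1) := by
  rcases eq_or_ne s 0 with rfl | hs
  · simp
  have hN' : (0 : ℝ) < N := Nat.cast_pos.2 hN
  have hderiv : ∀ x ∈ Set.Icc (N : ℝ) (N + 1), HasDerivWithinAt (fun y : ℝ => (y : ℂ) ^ (-s))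
      (-s * (x : ℂ) ^ (-s - 1)) (Set.Icc (N : ℝ) (N + 1)) x := fun x hx =>
    (hasDerivAt_ofReal_cpow_const (hN'.trans_le hx.1).ne' (neg_ne_zero.2 hs)).hasDerivWithinAt
  have hbound : ∀ x ∈ Set.Icc (N : ℝ) (N + 1), ‖-s * (x : ℂ) ^ (-s - 1)‖ ≤
      ‖s‖ * 2 ^ (‖s‖ + 1) / (N : ℝ) ^ (s.re + 1) := by
    intro x hx
    have hx0 : 0 < x := hN'.trans_le hx.1
    rw [norm_mul, norm_neg, Complex.norm_cpow_eq_rpow_re_of_pos hx0, div_eq_mul_inv, mul_assoc,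
      ← Real.rpow_neg hN'.le]
    gcongr
    calc x ^ (-s - 1).re ≤ 2 ^ |(-s - 1).re| * (N : ℝ) ^ (-s - 1).re :=
          Real.rpow_le_two_rpow_abs_mul_rpow _ hN' hx.1
            (by linarith [hx.2, (Nat.one_le_cast (α := ℝ)).2 hN])
      _ ≤ 2 ^ (‖s‖ + 1) * (N : ℝ) ^ (-(s.re + 1)) := by
          have : (-s - 1).re = -(s.re + 1) := by simp; ring
          rw [this, abs_neg]
          gcongr
          · norm_num
          · exact (abs_add_le _ _).trans (by simp [Complex.abs_re_le_norm])
  have := (convex_Icc (N : ℝ) (N + 1)).norm_image_sub_le_of_norm_hasDerivWithin_le hderiv hbound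
    (Set.right_mem_Icc.2 (by linarith)) (Set.left_mem_Icc.2 (by linarith))
  simpa using this

lemma summable_div_nat_rpow_of_bddAbove {b : ℕ → ℝ} (hb0 : ∀ N, 0 ≤ b N)
    (hb : BddAbove (Set.range b)) {p : ℝ} (hp : 1 < p) :
    Summable fun N : ℕ => b N / (N : ℝ) ^ p := by
  obtain ⟨B, hB⟩ := hb
  refine .of_nonneg_of_le (fun N => div_nonneg (hb0 N) (by positivity)) (fun N => ?_)
    ((Real.summable_one_div_nat_rpow.2 hp).mul_left B)
  rw [← div_eq_mul_one_div]
  exact div_le_div_of_nonneg_right (hB ⟨N, rfl⟩) (by positivity)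

lemma tendsto_mul_tsum_one_div_nat_rpow :
    Tendsto (fun δ : ℝ => δ * ∑' N : ℕ, 1 / (N : ℝ) ^ (1 + δ)) (𝓝[>] 0) (𝓝 1) := by
  have h : Tendsto (fun δ : ℝ => 1 + δ) (𝓝[>] 0) (𝓝[>] 1) :=
    ((continuous_const.add continuous_id).tendsto' 0 1 (add_zero 1)).inf
      (tendsto_principal_principal.2 fun δ (hδ : 0 < δ) => show 1 < 1 + δ by linarith)
  simpa [Function.comp_def] using tendsto_sub_mul_tsum_nat_rpow.comp h

lemma tendsto_mul_tsum_div_nat_rpow_of_tendsto_zero {b : ℕ → ℝ} (hb0 : ∀ N, 0 ≤ b N)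
    (hb : Tendsto b atTop (𝓝 0)) :
    Tendsto (fun δ : ℝ => δ * ∑' N : ℕ, b N / (N : ℝ) ^ (1 + δ)) (𝓝[>] 0) (𝓝 0) := by
  have hzeta : ∀ δ : ℝ, 0 < δ → Summable fun N : ℕ => 1 / (N : ℝ) ^ (1 + δ) := fun δ hδ =>
    Real.summable_one_div_nat_rpow.2 (by linarith)
  have hsum : ∀ δ : ℝ, 0 < δ → Summable fun N : ℕ => b N / (N : ℝ) ^ (1 + δ) := fun δ hδ =>
    summable_div_nat_rpow_of_bddAbove hb0 hb.bddAbove_range (by linarith)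
  refine tendsto_order.2 ⟨fun a ha => ?_, fun ε hε => ?_⟩
  · filter_upwards [self_mem_nhdsWithin] with δ (hδ : 0 < δ)
    exact ha.trans_le (mul_nonneg hδ.le (tsum_nonneg fun N => div_nonneg (hb0 N) (by positivity)))
  obtain ⟨N₀, hN₀⟩ := eventually_atTop.1 (hb.eventually (ge_mem_nhds (by positivity : 0 < ε / 4)))
  set H := ∑ N ∈ Finset.range N₀, b N
  have hsplit : ∀ δ : ℝ, 0 < δ →
      ∑' N : ℕ, b N / (N : ℝ) ^ (1 + δ) ≤ H + ε / 4 * ∑' N : ℕ, 1 / (N : ℝ) ^ (1 + δ) := by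
    intro δ hδ
    rw [← (hsum δ hδ).sum_add_tsum_nat_add N₀]
    refine add_le_add (Finset.sum_le_sum fun N _ => ?_) ?_
    · rcases N.eq_zero_or_pos with rfl | hN
      · simp [Real.zero_rpow (by linarith : 1 + δ ≠ 0), hb0]
      exact div_le_self (hb0 N) (Real.one_le_rpow (Nat.one_le_cast.2 hN) (by linarith))
    calc ∑' N : ℕ, b (N + N₀) / ((N + N₀ : ℕ) : ℝ) ^ (1 + δ)
        ≤ ∑' N : ℕ, ε / 4 * (1 / ((N + N₀ : ℕ) : ℝ) ^ (1 + δ)) := by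
          refine ((hsum δ hδ).comp_injective (add_left_injective N₀)).tsum_le_tsum
            (fun N => ?_) (((hzeta δ hδ).comp_injective (add_left_injective N₀)).mul_left _)
          rw [← div_eq_mul_one_div]
          exact div_le_div_of_nonneg_right (hN₀ _ (by omega)) (by positivity)
      _ ≤ ε / 4 * ∑' N : ℕ, 1 / (N : ℝ) ^ (1 + δ) := by
          rw [tsum_mul_left]
          exact mul_le_mul_of_nonneg_left (tsum_comp_le_tsum_of_inj (hzeta δ hδ)
            (fun N => by positivity) (add_left_injective N₀)) (by positivity)
  have hH : Tendsto (fun δ : ℝ => δ * H) (𝓝[>] 0) (𝓝 0) :=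
    ((continuous_id.mul continuous_const).tendsto' 0 0 (zero_mul H)).mono_left nhdsWithin_le_nhds
  filter_upwards [self_mem_nhdsWithin, hH.eventually (gt_mem_nhds (half_pos hε)),
    tendsto_mul_tsum_one_div_nat_rpow.eventually (gt_mem_nhds one_lt_two)] with δ hδ hδH hδZ
  calc δ * ∑' N : ℕ, b N / (N : ℝ) ^ (1 + δ)
      ≤ δ * (H + ε / 4 * ∑' N : ℕ, 1 / (N : ℝ) ^ (1 + δ)) :=
        mul_le_mul_of_nonneg_left (hsplit δ hδ) (le_of_lt hδ)
    _ = δ * H + ε / 4 * (δ * ∑' N : ℕ, 1 / (N : ℝ) ^ (1 + δ)) := by ring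
    _ < ε / 2 + ε / 4 * 2 := by gcongr
    _ = ε := by ring

noncomputable def abelSeries (A : ℕ → ℂ) (s : ℂ) : ℂ :=
  ∑' N : ℕ, A N * ((N : ℂ) ^ (-s) - ((N : ℂ) + 1) ^ (-s))

section AbelSeries

variable {A : ℕ → ℂ}

lemma exists_forall_norm_le_mul_rpow (hA0 : A 0 = 0) {σ : ℝ}
    (h : (fun N => ‖A N‖) =O[atTop] fun N : ℕ => (N : ℝ) ^ σ) :
    ∃ M, ∀ N : ℕ, ‖A N‖ ≤ M * (N : ℝ) ^ σ := by
  have hzero : ∀ N : ℕ, (N : ℝ) ^ σ = 0 → ‖A N‖ = 0 := by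
    intro N hN
    obtain ⟨hN0, -⟩ := (Real.rpow_eq_zero_iff_of_nonneg N.cast_nonneg).1 hN
    rw [Nat.cast_eq_zero.1 hN0, hA0, norm_zero]
  obtain ⟨M, hM⟩ := (isBigO_nat_atTop_iff hzero).1 h
  exact ⟨M, fun N => by simpa [abs_of_nonneg (Real.rpow_nonneg N.cast_nonneg σ)] using hM N⟩

lemma norm_abelSeries_term_le (hA0 : A 0 = 0) (s : ℂ) (N : ℕ) :
    ‖A N * ((N : ℂ) ^ (-s) - ((N : ℂ) + 1) ^ (-s))‖ ≤
      ‖s‖ * 2 ^ (‖s‖ + 1) * (‖A N‖ / (N : ℝ) ^ (s.re + 1)) := by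
  rcases N.eq_zero_or_pos with rfl | hN
  · simp [hA0]
  calc ‖A N * ((N : ℂ) ^ (-s) - ((N : ℂ) + 1) ^ (-s))‖
      ≤ ‖A N‖ * (‖s‖ * 2 ^ (‖s‖ + 1) / (N : ℝ) ^ (s.re + 1)) := by
        rw [norm_mul]
        exact mul_le_mul_of_nonneg_left (norm_natCast_cpow_neg_sub_succ_le s hN) (norm_nonneg _)
    _ = ‖s‖ * 2 ^ (‖s‖ + 1) * (‖A N‖ / (N : ℝ) ^ (s.re + 1)) := by ring

lemma div_rpow_le_of_norm_le_mul_rpow (hA0 : A 0 = 0) {M σ₀ η : ℝ}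
    (hA : ∀ N : ℕ, ‖A N‖ ≤ M * (N : ℝ) ^ σ₀) (hη : 0 < η) {σ : ℝ} (hσ : σ₀ + η ≤ σ) (N : ℕ) :
    ‖A N‖ / (N : ℝ) ^ (σ + 1) ≤ M / (N : ℝ) ^ (1 + η) := by
  rcases N.eq_zero_or_pos with rfl | hN
  · simp [hA0, Real.zero_rpow (by linarith : 1 + η ≠ 0)]
  have hN' : (1 : ℝ) ≤ N := Nat.one_le_cast.2 hN
  have hpow : 0 < (N : ℝ) ^ σ₀ := by positivity
  calc ‖A N‖ / (N : ℝ) ^ (σ + 1) ≤ M * (N : ℝ) ^ σ₀ / (N : ℝ) ^ (σ₀ + (1 + η)) :=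
        div_le_div₀ ((norm_nonneg _).trans (hA N)) (hA N) (by positivity)
          (Real.rpow_le_rpow_of_exponent_le hN' (by linarith))
    _ = M / (N : ℝ) ^ (1 + η) := by
        rw [Real.rpow_add (by positivity), mul_comm ((N : ℝ) ^ σ₀), mul_div_mul_right _ _ hpow.ne']

lemma norm_abelSeries_term_le_of_norm_le_mul_rpow (hA0 : A 0 = 0) {M σ₀ η : ℝ}
    (hA : ∀ N : ℕ, ‖A N‖ ≤ M * (N : ℝ) ^ σ₀) (hη : 0 < η) {s : ℂ} (hs : σ₀ + η ≤ s.re)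
    (N : ℕ) :
    ‖A N * ((N : ℂ) ^ (-s) - ((N : ℂ) + 1) ^ (-s))‖ ≤
      ‖s‖ * 2 ^ (‖s‖ + 1) * (M / (N : ℝ) ^ (1 + η)) :=
  (norm_abelSeries_term_le hA0 s N).trans <|
    mul_le_mul_of_nonneg_left (div_rpow_le_of_norm_le_mul_rpow hA0 hA hη hs N) (by positivity)

lemma summable_norm_abelSeries_term (hA0 : A 0 = 0) {M σ₀ : ℝ}
    (hA : ∀ N : ℕ, ‖A N‖ ≤ M * (N : ℝ) ^ σ₀) {s : ℂ} (hs : σ₀ < s.re) :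
    Summable fun N : ℕ => ‖A N * ((N : ℂ) ^ (-s) - ((N : ℂ) + 1) ^ (-s))‖ := by
  have hη : 0 < s.re - σ₀ := sub_pos.2 hs
  refine .of_nonneg_of_le (fun _ => norm_nonneg _)
    (norm_abelSeries_term_le_of_norm_le_mul_rpow hA0 hA hη (by linarith)) ?_
  simp_rw [div_eq_mul_one_div M]
  exact ((Real.summable_one_div_nat_rpow.2 (by linarith)).mul_left M).mul_left _

lemma differentiableOn_abelSeries (hA0 : A 0 = 0) {M σ₀ : ℝ}
    (hA : ∀ N : ℕ, ‖A N‖ ≤ M * (N : ℝ) ^ σ₀) :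
    DifferentiableOn ℂ (abelSeries A) {s | σ₀ < s.re} := by
  intro z (hz : σ₀ < z.re)
  have hM : 0 ≤ M := by simpa using (norm_nonneg _).trans (hA 1)
  set η := (z.re - σ₀) / 2
  have hη : 0 < η := half_pos (sub_pos.2 hz)
  set R := ‖z‖ + 1
  set V := {s : ℂ | σ₀ + η < s.re} ∩ Metric.ball 0 R
  have hV : IsOpen V :=
    (isOpen_lt continuous_const Complex.continuous_re).inter Metric.isOpen_ball
  have hzV : z ∈ V := ⟨show σ₀ + (z.re - σ₀) / 2 < z.re by linarith, by simp [R]⟩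
  have hterm : ∀ N : ℕ, DifferentiableOn ℂ
      (fun s : ℂ => A N * ((N : ℂ) ^ (-s) - ((N : ℂ) + 1) ^ (-s))) V := by
    intro N
    rcases N.eq_zero_or_pos with rfl | hN
    · simp [hA0, differentiableOn_const]
    refine (((differentiable_id.neg.const_cpow (Or.inl ?_)).sub
      (differentiable_id.neg.const_cpow (Or.inl ?_))).const_mul _).differentiableOn
    · exact Nat.cast_ne_zero.2 hN.ne'
    · exact_mod_cast N.succ_ne_zero
  have hbound : ∀ N : ℕ, ∀ w ∈ V, ‖A N * ((N : ℂ) ^ (-w) - ((N : ℂ) + 1) ^ (-w))‖ ≤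
      R * 2 ^ (R + 1) * (M / (N : ℝ) ^ (1 + η)) := by
    intro N w hw
    have hwR : ‖w‖ ≤ R := by simpa using (Metric.mem_ball.1 hw.2).le
    refine (norm_abelSeries_term_le_of_norm_le_mul_rpow hA0 hA hη hw.1.le N).trans ?_
    gcongr
    norm_num
  have hu : Summable fun N : ℕ => R * 2 ^ (R + 1) * (M / (N : ℝ) ^ (1 + η)) := by
    simp_rw [div_eq_mul_one_div M]
    exact ((Real.summable_one_div_nat_rpow.2 (by linarith)).mul_left M).mul_left _
  exact ((Complex.differentiableOn_tsum_of_summable_norm hu hterm hV hbound).differentiableAt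
    (hV.mem_nhds hzV)).differentiableWithinAt

lemma tendsto_ofReal_mul_abelSeries_nhdsGT_zero (hA0 : A 0 = 0) {s₀ : ℂ}
    (h : (fun N => ‖A N‖) =o[atTop] fun N : ℕ => (N : ℝ) ^ s₀.re) :
    Tendsto (fun δ : ℝ => (δ : ℂ) * abelSeries A (s₀ + δ)) (𝓝[>] 0) (𝓝 0) := by
  set b : ℕ → ℝ := fun N => ‖A N‖ / (N : ℝ) ^ s₀.re
  have hb0 : ∀ N, 0 ≤ b N := fun N => div_nonneg (norm_nonneg _) (by positivity)
  have hb : Tendsto b atTop (𝓝 0) := h.tendsto_div_nhds_zero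
  set C : ℂ → ℝ := fun s => ‖s‖ * 2 ^ (‖s‖ + 1)
  have hC : Tendsto (fun δ : ℝ => C (s₀ + δ)) (𝓝[>] 0) (𝓝 (C s₀)) := by
    have : Continuous fun δ : ℝ => C (s₀ + δ) := by simp only [C]; fun_prop (disch := norm_num)
    simpa using (this.tendsto 0).mono_left nhdsWithin_le_nhds
  have hbound : ∀ δ : ℝ, 0 < δ → ‖(δ : ℂ) * abelSeries A (s₀ + δ)‖ ≤
      C (s₀ + δ) * (δ * ∑' N : ℕ, b N / (N : ℝ) ^ (1 + δ)) := by
    intro δ hδ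
    have hterm : ∀ N : ℕ, ‖A N‖ / (N : ℝ) ^ ((s₀ + δ).re + 1) = b N / (N : ℝ) ^ (1 + δ) := by
      intro N
      rcases N.eq_zero_or_pos with rfl | hN
      · simp [b, hA0]
      rw [div_div, ← Real.rpow_add (Nat.cast_pos.2 hN)]
      congr 2
      simp; ring
    have hF : ‖abelSeries A (s₀ + δ)‖ ≤ C (s₀ + δ) * ∑' N : ℕ, b N / (N : ℝ) ^ (1 + δ) :=
      tsum_of_norm_bounded ((summable_div_nat_rpow_of_bddAbove hb0 hb.bddAbove_range
        (by linarith : (1 : ℝ) < 1 + δ)).hasSum.mul_left _)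
        fun N => (norm_abelSeries_term_le hA0 _ N).trans_eq (by rw [hterm])
    rw [norm_mul, Complex.norm_real, Real.norm_of_nonneg hδ.le, mul_left_comm]
    exact mul_le_mul_of_nonneg_left hF hδ.le
  refine squeeze_zero_norm' ?_
    (by simpa using hC.mul (tendsto_mul_tsum_div_nat_rpow_of_tendsto_zero hb0 hb))
  filter_upwards [self_mem_nhdsWithin] with δ hδ using hbound δ hδ

end AbelSeries

lemma sum_range_partialSum_mul_cpow_sub (α : ℕ → ℂ) {s : ℂ} (hs : s ≠ 0) (K : ℕ) :
    ∑ N ∈ Finset.range K,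
        (∑ n ∈ Finset.Icc 1 N, α n) * ((N : ℂ) ^ (-s) - ((N : ℂ) + 1) ^ (-s)) =
      ∑ n ∈ Finset.range (K + 1), α n / (n : ℂ) ^ s -
        (∑ n ∈ Finset.Icc 1 K, α n) / (K : ℂ) ^ s := by
  induction K with
  | zero => simp [Complex.zero_cpow hs]
  | succ K ih =>
    rw [Finset.sum_range_succ, ih, Finset.sum_range_succ _ (K + 1),
      Finset.sum_Icc_succ_top (by omega), Complex.cpow_neg, Complex.cpow_neg]
    push_cast
    ring

lemma abelSeries_partialSum_eq_tsum {α : ℕ → ℂ} {M σ₀ : ℝ}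
    (hA : ∀ N : ℕ, ‖∑ n ∈ Finset.Icc 1 N, α n‖ ≤ M * (N : ℝ) ^ σ₀) {s : ℂ} (hs : σ₀ < s.re)
    (hs0 : s ≠ 0) (hα : Summable fun n : ℕ => α n / (n : ℂ) ^ s) :
    abelSeries (fun N => ∑ n ∈ Finset.Icc 1 N, α n) s = ∑' n : ℕ, α n / (n : ℂ) ^ s := by
  have hboundary : Tendsto (fun K : ℕ => (∑ n ∈ Finset.Icc 1 K, α n) / (K : ℂ) ^ s) atTop
      (𝓝 0) := by
    have hK : Tendsto (fun K : ℕ => M * (K : ℝ) ^ (-(s.re - σ₀))) atTop (𝓝 0) := by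
      simpa using ((tendsto_rpow_neg_atTop (sub_pos.2 hs)).comp
        tendsto_natCast_atTop_atTop).const_mul M
    refine squeeze_zero_norm' ?_ hK
    filter_upwards [eventually_gt_atTop 0] with K hK
    have hK' : (0 : ℝ) < K := Nat.cast_pos.2 hK
    rw [norm_div, Complex.norm_natCast_cpow_of_pos hK, neg_sub, Real.rpow_sub hK', mul_div_assoc']
    exact div_le_div_of_nonneg_right (hA K) (by positivity)
  have hsums := ((hα.hasSum.tendsto_sum_nat.comp (tendsto_add_atTop_nat 1)).sub hboundary).congr
    fun K => (sum_range_partialSum_mul_cpow_sub α hs0 K).symm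
  rw [sub_zero] at hsums
  exact tendsto_nhds_unique
    ((summable_norm_abelSeries_term (by simp) hA hs).of_norm.hasSum.tendsto_sum_nat) hsums

lemma eqOn_abelSeries_partialSum {α : ℕ → ℂ} {E : ℂ → ℂ} {σa σ₀ M : ℝ}
    (hA : ∀ N : ℕ, ‖∑ n ∈ Finset.Icc 1 N, α n‖ ≤ M * (N : ℝ) ^ σ₀)
    (hsum : ∀ s : ℂ, σa < s.re → Summable fun n : ℕ => α n / (n : ℂ) ^ s)
    (hE : ∀ s : ℂ, σa < s.re → E s = ∑' n : ℕ, α n / (n : ℂ) ^ s)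
    (hE_diff : DifferentiableOn ℂ E {s | σ₀ < s.re}) :
    Set.EqOn E (abelSeries fun N => ∑ n ∈ Finset.Icc 1 N, α n) {s | σ₀ < s.re} := by
  have hopen : ∀ c : ℝ, IsOpen {s : ℂ | c < s.re} := fun c =>
    isOpen_lt continuous_const Complex.continuous_re
  set c := max (max σa σ₀) 0
  have hσac : σa ≤ c := (le_max_left _ _).trans (le_max_left _ _)
  have hσ₀c : σ₀ ≤ c := (le_max_right _ _).trans (le_max_left _ _)
  have hc : 0 ≤ c := le_max_right _ _
  have heq : E =ᶠ[𝓝 ((c + 1 : ℝ) : ℂ)] abelSeries fun N => ∑ n ∈ Finset.Icc 1 N, α n := by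
    filter_upwards [(hopen c).mem_nhds (by simp)] with s (hs : c < s.re)
    have hs0 : s ≠ 0 := by rintro rfl; simp at hs; linarith
    rw [hE s (hσac.trans_lt hs),
      abelSeries_partialSum_eq_tsum hA (hσ₀c.trans_lt hs) hs0 (hsum s (hσac.trans_lt hs))]
  exact (hE_diff.analyticOnNhd (hopen σ₀)).eqOn_of_preconnected_of_eventuallyEq
    ((differentiableOn_abelSeries (by simp) hA).analyticOnNhd (hopen σ₀))
    (convex_halfSpace_re_gt σ₀).isPreconnected
    (show σ₀ < ((c + 1 : ℝ) : ℂ).re by simp; linarith) heq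

theorem omega_result_of_nonreal_pole_general (α : ℕ → ℂ) (E : ℂ → ℂ) (σa σ₀ t₀ : ℝ) (r : ℂ)
    (hsum : ∀ s : ℂ, σa < s.re → Summable (fun n : ℕ => ‖α n / (n : ℂ) ^ s‖))
    (hE : ∀ s : ℂ, σa < s.re → E s = ∑' n : ℕ, α n / (n : ℂ) ^ s)
    (hholo : ∀ s : ℂ, σ₀ ≤ s.re → s ≠ (σ₀ : ℂ) + t₀ * Complex.I →
      s ≠ (σ₀ : ℂ) - t₀ * Complex.I → DifferentiableAt ℂ E s)
    (hpole : Tendsto (fun s : ℂ => (s - ((σ₀ : ℂ) + t₀ * Complex.I)) * E s)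
      (nhdsWithin ((σ₀ : ℂ) + t₀ * Complex.I) {((σ₀ : ℂ) + t₀ * Complex.I)}ᶜ) (nhds r))
    (hr : r ≠ 0) :
    ¬ (fun X : ℕ => ‖∑ n ∈ Finset.Icc 1 X, α n‖) =o[atTop]
        (fun X : ℕ => (X : ℝ) ^ σ₀) := by
  intro hlittle
  set s₀ : ℂ := σ₀ + t₀ * Complex.I
  have hs₀ : s₀.re = σ₀ := by simp [s₀]
  obtain ⟨M, hM⟩ := exists_forall_norm_le_mul_rpow (by simp) hlittle.isBigO
  have hEF := eqOn_abelSeries_partialSum hM (fun s hs => (hsum s hs).of_norm) hE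
    fun s (hs : σ₀ < s.re) => (hholo s hs.le (by rintro rfl; exact hs.ne' hs₀)
      (by rintro rfl; simp at hs)).differentiableWithinAt
  have hpath : Tendsto (fun δ : ℝ => s₀ + δ) (𝓝[>] 0) (𝓝[≠] s₀) := by
    refine tendsto_nhdsWithin_iff.2 ⟨?_, ?_⟩
    · have := (tendsto_const_nhds (x := s₀)).add
        (Complex.continuous_ofReal.tendsto' 0 0 Complex.ofReal_zero)
      rw [add_zero] at this
      exact this.mono_left nhdsWithin_le_nhds
    · filter_upwards [self_mem_nhdsWithin] with δ (hδ : 0 < δ)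
      simpa using hδ.ne'
  have hE_lim : Tendsto (fun δ : ℝ => (δ : ℂ) * E (s₀ + δ)) (𝓝[>] 0) (𝓝 r) := by
    simpa [Function.comp_def] using hpole.comp hpath
  refine hr (tendsto_nhds_unique (hE_lim.congr' ?_)
    (tendsto_ofReal_mul_abelSeries_nhdsGT_zero (by simp) (hs₀ ▸ hlittle)))
  filter_upwards [self_mem_nhdsWithin] with δ (hδ : 0 < δ)
  rw [hEF (show σ₀ < (s₀ + δ).re by simp [hs₀, hδ])]

/-- Landau-type Omega result: if the Dirichlet series `D(s) = ∑ α(n)/n^s` admits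
meromorphic continuation with a pole at `s₀ = σ₀ + it₀`, `t₀ ≠ 0`, with nonzero
residue, then `∑_{n ≤ X} α(n)` is not `o(X^{σ₀})`. -/
theorem omega_result_of_nonreal_pole (α : ℕ → ℂ) (E : ℂ → ℂ) (σa σ₀ t₀ : ℝ) (r : ℂ)
    (hα0 : α 0 = 0) (hσ : σ₀ ≤ σa)
    (hsum : ∀ s : ℂ, σa < s.re → Summable (fun n : ℕ => ‖α n / (n : ℂ) ^ s‖))
    (hE : ∀ s : ℂ, σa < s.re → E s = ∑' n : ℕ, α n / (n : ℂ) ^ s)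
    (ht₀ : t₀ ≠ 0)
    (hholo : ∀ s : ℂ, σ₀ ≤ s.re → s ≠ (σ₀ : ℂ) + t₀ * Complex.I →
      s ≠ (σ₀ : ℂ) - t₀ * Complex.I → DifferentiableAt ℂ E s)
    (hpole : Tendsto (fun s : ℂ => (s - ((σ₀ : ℂ) + t₀ * Complex.I)) * E s)
      (nhdsWithin ((σ₀ : ℂ) + t₀ * Complex.I) {((σ₀ : ℂ) + t₀ * Complex.I)}ᶜ) (nhds r))
    (hr : r ≠ 0) :
    ¬ (fun X : ℕ => ‖∑ n ∈ Finset.Icc 1 X, α n‖) =o[atTop]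
        (fun X : ℕ => (X : ℝ) ^ σ₀) :=
  omega_result_of_nonreal_pole_general α E σa σ₀ t₀ r hsum hE hholo hpole hr
end
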